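/- Let G and H be connected non-trivial graphs with H not complete. Then tn(G ∘ H) ≤ 3 · tn(G). -/

import Mathlib

open SimpleGraph

/-- A walk `W` between `u` and `v` is a *tolled walk* if either `u = v` and `W` is trivial,
or `u` and `v` are adjacent and `W` is the single-edge walk, or `u ≠ v` are non-adjacent,
`W` has at least one interior vertex, `u` is adjacent exactly to the interior vertex
at position 1 and `v` exactly to the interior vertex at position `W.length - 1`. -/
def IsTolledWalk {V : Type*} (G : SimpleGraph V) {u v : V} (W : G.Walk u v) : Prop :=
  (u = v ∧ W.length = 0) ∨
  (G.Adj u v ∧ W.support = [u, v]) ∨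
  (¬ G.Adj u v ∧ u ≠ v ∧ 2 ≤ W.length ∧
    (∀ i, 0 < i → i < W.length → (G.Adj u (W.support.getD i u) ↔ i = 1)) ∧
    (∀ i, 0 < i → i < W.length → (G.Adj v (W.support.getD i u) ↔ i = W.length - 1)))

/-- The toll interval between `u` and `v`: vertices lying on some tolled walk. -/
def tollInterval {V : Type*} (G : SimpleGraph V) (u v : V) : Set V :=
  {x | ∃ W : G.Walk u v, IsTolledWalk G W ∧ x ∈ W.support}

/-- A toll set: the toll intervals between its pairs cover the vertex set. -/
def IsTollSet {V : Type*} (G : SimpleGraph V) (S : Set V) : Prop :=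
  ∀ x : V, ∃ u ∈ S, ∃ v ∈ S, x ∈ tollInterval G u v

/-- The toll number: minimum size of a toll set. -/
noncomputable def tollNumber {V : Type*} (G : SimpleGraph V) : ℕ :=
  sInf {n | ∃ S : Set V, S.Finite ∧ S.ncard = n ∧ IsTollSet G S}

/-- `v` is a cut vertex if deleting it disconnects the graph. -/
def IsCutVertex {V : Type*} (G : SimpleGraph V) (v : V) : Prop :=
  ¬ (G.induce {w | w ≠ v}).Preconnected

/-- The extreme vertices of `G` with respect to toll convexity. -/
def extremeVertices {V : Type*} (G : SimpleGraph V) : Set V :=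
  {s | ∀ x y : V, x ≠ s → y ≠ s → s ∉ tollInterval G x y}

/-- The lexicographic product of simple graphs. -/
def lexProd {V W : Type*} (G : SimpleGraph V) (H : SimpleGraph W) : SimpleGraph (V × W) where
  Adj a b := G.Adj a.1 b.1 ∨ (a.1 = b.1 ∧ H.Adj a.2 b.2)
  symm := ⟨by
    rintro a b (h | ⟨h1, h2⟩)
    · exact Or.inl h.symm
    · exact Or.inr ⟨h1.symm, h2.symm⟩⟩
  loopless := ⟨by
    rintro a (h | ⟨_, h⟩)
    · exact G.loopless.irrefl _ h
    · exact H.loopless.irrefl _ h⟩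

/-!
Let `S` be a toll set of `G`, fix non-adjacent `a ≠ b` in `H` and a neighbour `u'` of every
`u ∈ S`. For any `σ : V → W` the section `v ↦ (v, σ v)` is an induced copy of `G` in `G ∘ H`,
so it carries tolled walks to tolled walks. If `x ∉ S` lies on a tolled walk between `p, q ∈ S`,
the section with `σ x = w` and `σ = a` elsewhere puts `(x, w)` on a tolled walk between
`(p, a)` and `(q, a)`. If `x ∈ S`, then `(x, w)` is a common neighbour of the non-adjacent
vertices `(x', a)` and `(x', b)`. Hence `S × {a} ∪ {u' | u ∈ S} × {a, b}` is a toll set of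
`G ∘ H` with at most `3 |S|` elements.
-/

namespace SimpleGraph

section TollInterval

variable {V V' : Type*} {G : SimpleGraph V} {G' : SimpleGraph V'}

theorem IsTolledWalk.map (f : G ↪g G') {u v : V} {p : G.Walk u v} (hp : IsTolledWalk G p) :
    IsTolledWalk G' (p.map f.toHom) := by
  have hget : ∀ i, (p.map f.toHom).support.getD i (f u) = f (p.support.getD i u) := fun i => by
    rw [Walk.support_map]
    exact List.getD_map ..
  rcases hp with ⟨rfl, hlen⟩ | ⟨hadj, hsupp⟩ | ⟨hnadj, hne, hlen, hu, hv⟩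
  · exact Or.inl ⟨rfl, by rwa [Walk.length_map]⟩
  · exact Or.inr (Or.inl ⟨f.map_adj_iff.2 hadj, by rw [Walk.support_map, hsupp]; rfl⟩)
  · refine Or.inr (Or.inr ⟨by simpa using hnadj, f.injective.ne hne, by rwa [Walk.length_map],
      fun i hi0 hi => ?_, fun i hi0 hi => ?_⟩) <;>
      rw [Walk.length_map] at hi <;>
      simp only [Walk.length_map, RelEmbedding.coe_toRelHom, hget, f.map_adj_iff]
    · exact hu i hi0 hi
    · exact hv i hi0 hi

theorem mem_tollInterval_map (f : G ↪g G') {u v x : V} (hx : x ∈ tollInterval G u v) :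
    f x ∈ tollInterval G' (f u) (f v) := by
  obtain ⟨p, hp, hxp⟩ := hx
  exact ⟨p.map f.toHom, hp.map f, by rw [Walk.support_map]; exact List.mem_map_of_mem hxp⟩

theorem mem_tollInterval_of_adj_of_adj {u v x : V} (huv : u ≠ v) (hnadj : ¬G.Adj u v)
    (hux : G.Adj u x) (hxv : G.Adj x v) : x ∈ tollInterval G u v := by
  refine ⟨.cons hux (.cons hxv .nil), Or.inr (Or.inr ⟨hnadj, huv, by simp, ?_, ?_⟩), by simp⟩ <;>
  · intro i hi0 hi
    obtain rfl : i = 1 := by simp only [Walk.length_cons, Walk.length_nil] at hi; omega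
    simp [hux, hxv.symm]

theorem mem_tollInterval_self (v : V) : v ∈ tollInterval G v v :=
  ⟨.nil, Or.inl ⟨rfl, rfl⟩, by simp⟩

theorem tollNumber_le_ncard {S : Set V} (hS : S.Finite) (h : IsTollSet G S) :
    tollNumber G ≤ S.ncard :=
  Nat.sInf_le ⟨S, hS, rfl, h⟩

theorem exists_isTollSet_ncard_eq_tollNumber [Finite V] (G : SimpleGraph V) :
    ∃ S : Set V, IsTollSet G S ∧ S.ncard = tollNumber G := by
  have hne : {n | ∃ S : Set V, S.Finite ∧ S.ncard = n ∧ IsTollSet G S}.Nonempty :=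
    ⟨_, Set.univ, Set.finite_univ, rfl, fun x => ⟨x, trivial, x, trivial, mem_tollInterval_self x⟩⟩
  obtain ⟨S, -, hS, hcard⟩ := Nat.sInf_mem hne
  exact ⟨S, hcard, hS⟩

end TollInterval

section LexProd

variable {V W : Type*} {G : SimpleGraph V} {H : SimpleGraph W}

def lexProdSection (G : SimpleGraph V) (H : SimpleGraph W) (σ : V → W) : G ↪g lexProd G H where
  toFun v := (v, σ v)
  inj' _ _ h := congrArg Prod.fst h
  map_rel_iff' := by
    refine ⟨?_, Or.inl⟩
    rintro (h | ⟨rfl, h⟩)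
    · exact h
    · exact absurd h (H.irrefl)

@[simp]
theorem lexProdSection_apply (σ : V → W) (v : V) : lexProdSection G H σ v = (v, σ v) :=
  rfl

theorem mk_mem_tollInterval_lexProd_of_adj {x y : V} (hxy : G.Adj x y) {a b : W} (hab : a ≠ b)
    (hnadj : ¬H.Adj a b) (w : W) : (x, w) ∈ tollInterval (lexProd G H) (y, a) (y, b) := by
  refine mem_tollInterval_of_adj_of_adj (fun h => hab (congrArg Prod.snd h)) ?_
    (Or.inl hxy.symm) (Or.inl hxy)
  rintro (h | ⟨-, h⟩)
  · exact G.irrefl h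
  · exact hnadj h

theorem mk_mem_tollInterval_lexProd [DecidableEq V] {p q x : V} (hx : x ∈ tollInterval G p q)
    (hp : p ≠ x) (hq : q ≠ x) (a w : W) :
    (x, w) ∈ tollInterval (lexProd G H) (p, a) (q, a) := by
  have := mem_tollInterval_map (lexProdSection G H (Function.update (fun _ => a) x w)) hx
  simpa [Function.update_of_ne hp, Function.update_of_ne hq] using this

theorem IsTollSet.exists_lexProd {S : Set V} (hS : IsTollSet G S) (hSfin : S.Finite)
    (hG : ∀ u, ∃ v, G.Adj u v) (hH : H ≠ ⊤) :
    ∃ T : Set (V × W), T.Finite ∧ IsTollSet (lexProd G H) T ∧ T.ncard ≤ 3 * S.ncard := by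
  classical
  obtain ⟨a, b, hab, hnadj⟩ := ne_top_iff_exists_not_adj.mp hH
  choose nb hnb using hG
  let T₀ := (fun u => (u, a)) '' S
  let T₁ := (fun u => (nb u, a)) '' S
  let T₂ := (fun u => (nb u, b)) '' S
  refine ⟨T₀ ∪ T₁ ∪ T₂, ((hSfin.image _).union (hSfin.image _)).union (hSfin.image _), ?_, ?_⟩
  · rintro ⟨x, w⟩
    by_cases hx : x ∈ S
    · exact ⟨(nb x, a), .inl (.inr ⟨x, hx, rfl⟩), (nb x, b), .inr ⟨x, hx, rfl⟩,
        mk_mem_tollInterval_lexProd_of_adj (hnb x) hab hnadj w⟩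
    · obtain ⟨p, hp, q, hq, hxpq⟩ := hS x
      exact ⟨(p, a), .inl (.inl ⟨p, hp, rfl⟩), (q, a), .inl (.inl ⟨q, hq, rfl⟩),
        mk_mem_tollInterval_lexProd hxpq (ne_of_mem_of_not_mem hp hx)
          (ne_of_mem_of_not_mem hq hx) a w⟩
  · calc (T₀ ∪ T₁ ∪ T₂).ncard ≤ T₀.ncard + T₁.ncard + T₂.ncard :=
          (Set.ncard_union_le _ _).trans (Nat.add_le_add_right (Set.ncard_union_le _ _) _)
      _ ≤ S.ncard + S.ncard + S.ncard := by
          gcongr <;> exact Set.ncard_image_le hSfin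
      _ = 3 * S.ncard := by ring

end LexProd

end SimpleGraph

theorem stmt10_general {V W : Type*} [Fintype V] [Nontrivial V]
    (G : SimpleGraph V) (H : SimpleGraph W)
    (hGc : G.Connected) (hH : H ≠ ⊤) :
    tollNumber (lexProd G H) ≤ 3 * tollNumber G := by
  obtain ⟨S, hS, hcard⟩ := exists_isTollSet_ncard_eq_tollNumber G
  obtain ⟨T, hTfin, hT, hTcard⟩ :=
    hS.exists_lexProd S.toFinite hGc.preconnected.exists_adj_of_nontrivial hH
  calc tollNumber (lexProd G H) ≤ T.ncard := tollNumber_le_ncard hTfin hT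
    _ ≤ 3 * S.ncard := hTcard
    _ = 3 * tollNumber G := by rw [hcard]

theorem stmt10 {V W : Type*} [Fintype V] [Fintype W] [Nontrivial V] [Nontrivial W]
    (G : SimpleGraph V) (H : SimpleGraph W)
    (hGc : G.Connected) (hHc : H.Connected) (hH : H ≠ ⊤) :
    tollNumber (lexProd G H) ≤ 3 * tollNumber G :=
  stmt10_general G H hGc hH
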